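/- If v_I ≠ 0 and α ≠ 0 then the matrix B^T B (block tridiagonal product of the multiple-shooting Jacobian with itself) is symmetric positive definite. -/

import Mathlib

/-!
`BᵀB` is positive definite as soon as `B` has trivial kernel, and `Bx = 0` is solved by
backward substitution: the last `α`-row forces the final unknown to vanish, the identity
blocks below the diagonal then force the interior unknowns to vanish one block at a time,
from the last to the first, and finally a row through a nonzero entry of `v_I` kills the
first unknown. Abstractly, every column has a pivot row whose other nonzero entries lie in
columns treated earlier.
-/

open Matrix

theorem Matrix.mulVec_injective_of_triangular {m n R : Type*} [Fintype n] [CommRing R]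
    [NoZeroDivisors R] (A : Matrix m n R) (level : n → ℕ) (row : n → m)
    (hpivot : ∀ c, A (row c) c ≠ 0)
    (htriangular : ∀ c c', A (row c) c' ≠ 0 → c' = c ∨ level c' < level c) :
    Function.Injective A.mulVec := by
  suffices hker : ∀ x, A *ᵥ x = 0 → ∀ l c, level c = l → x c = 0 from
    fun x y hxy => sub_eq_zero.mp <| funext fun c =>
      hker (x - y) (by rw [mulVec_sub, hxy, sub_self]) _ c rfl
  intro x hx l
  induction l using Nat.strong_induction_on with
  | _ l ih =>
    rintro c rfl
    have hrow : A (row c) c * x c = (A *ᵥ x) (row c) := by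
      show _ = ∑ c', A (row c) c' * x c'
      rw [Fintype.sum_eq_single c fun c' hc' => ?_]
      by_cases hA : A (row c) c' = 0
      · rw [hA, zero_mul]
      · obtain h | h := htriangular c c' hA
        · exact absurd h hc'
        · rw [ih _ h c' rfl, mul_zero]
    rw [hx, Pi.zero_apply] at hrow
    exact (mul_eq_zero.mp hrow).resolve_left (hpivot c)

def shootingJacobian {R : Type*} [CommRing R] (n N : ℕ) (vI vU : Fin n → R) (α : R)
    (M : Fin (N - 1) → Matrix (Fin n) (Fin n) R) (v : Fin (N - 1) → Fin n → R) :
    Matrix (Fin N × (Fin n ⊕ Unit)) (Unit ⊕ (Fin (N - 1) × Fin n) ⊕ Unit) R :=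
  Matrix.of fun r c =>
    match c, r with
    | Sum.inl _, (b, Sum.inl j) => if b.val = 0 then vI j else 0
    | Sum.inl _, (_, Sum.inr _) => 0
    | Sum.inr (Sum.inl (i, k)), (b, Sum.inl j) =>
        if b.val = i.val then M i j k
        else if b.val = i.val + 1 then (if j = k then (1 : R) else 0) else 0
    | Sum.inr (Sum.inl (i, k)), (b, Sum.inr _) => if b.val = i.val then v i k else 0
    | Sum.inr (Sum.inr _), (b, Sum.inl j) => if b.val = N - 1 then vU j else 0
    | Sum.inr (Sum.inr _), (b, Sum.inr _) => if b.val = N - 1 then α else 0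

theorem shootingJacobian_mulVec_injective {R : Type*} [CommRing R] [IsDomain R]
    {n N : ℕ} (hN : 0 < N) {vI vU : Fin n → R} {α : R} (hvI : vI ≠ 0) (hα : α ≠ 0)
    (M : Fin (N - 1) → Matrix (Fin n) (Fin n) R) (v : Fin (N - 1) → Fin n → R) :
    Function.Injective (shootingJacobian n N vI vU α M v).mulVec := by
  obtain ⟨j₀, hj₀⟩ : ∃ j, vI j ≠ 0 := Function.ne_iff.mp hvI
  -- levels: the final unknown first, then the interior blocks backwards, the initial unknown last
  refine Matrix.mulVec_injective_of_triangular _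
    (fun | .inl _ => N | .inr (.inl (i, _)) => N - 1 - i | .inr (.inr _) => 0)
    (fun | .inl _ => (⟨0, hN⟩, .inl j₀) | .inr (.inl (i, k)) => (⟨i + 1, by omega⟩, .inl k)
         | .inr (.inr _) => (⟨N - 1, by omega⟩, .inr ())) ?_ ?_
  · rintro (_ | ⟨i, k⟩ | _) <;> simp [shootingJacobian, hj₀, hα]
  · rintro (_ | ⟨i, k⟩ | _) (_ | ⟨i', k'⟩ | _) h <;> simp [shootingJacobian] at h ⊢ <;> grind

theorem stmt_11 (n N : ℕ) (hN : 2 ≤ N)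
    (vI vU : Fin n → ℝ) (α : ℝ) (hvI : vI ≠ 0) (hα : α ≠ 0)
    (M : Fin (N - 1) → Matrix (Fin n) (Fin n) ℝ)
    (v : Fin (N - 1) → Fin n → ℝ)
    (B : Matrix (Fin N × (Fin n ⊕ Unit)) (Unit ⊕ (Fin (N - 1) × Fin n) ⊕ Unit) ℝ)
    (hB : B = Matrix.of fun r c =>
      match r, c with
      | (b, Sum.inl j), Sum.inl _ => if b.val = 0 then vI j else 0
      | (_, Sum.inr _), Sum.inl _ => 0
      | (b, Sum.inl j), Sum.inr (Sum.inl (i, k)) =>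
          if b.val = i.val then M i j k
          else if b.val = i.val + 1 then (if j = k then (1 : ℝ) else 0) else 0
      | (b, Sum.inr _), Sum.inr (Sum.inl (i, k)) => if b.val = i.val then v i k else 0
      | (b, Sum.inl j), Sum.inr (Sum.inr _) => if b.val = N - 1 then vU j else 0
      | (b, Sum.inr _), Sum.inr (Sum.inr _) => if b.val = N - 1 then α else 0) :
    (Bᵀ * B).PosDef := by
  have hB_shooting : B = shootingJacobian n N vI vU α M v := by
    subst hB
    ext ⟨b, _ | _⟩ (_ | ⟨i, k⟩ | _) <;> rfl
  have hB_injective : Function.Injective B.mulVec :=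
    hB_shooting ▸ shootingJacobian_mulVec_injective (by omega) hvI hα M v
  simpa [conjTranspose_eq_transpose_of_trivial] using PosDef.conjTranspose_mul_self B hB_injective
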